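/- arXiv:0712.3023 — 7 statements merged into one kernel-verified Lean document; each statement's English description precedes it below -/
import Mathlib

section
/- Let f : ℝ → ℝ be continuous and let V be a nonempty bounded open interval such that f^n(∂V) ∩ V = ∅ for every n ≥ 1 (V is a 'nice' interval). Let 0 ≤ k < l be integers, let A be a connected component of f^{−k}(V) (the preimage of V under the k-th iterate f^k) and let B be a connected component of f^{−l}(V). Then ∂A ∩ B = ∅. -/
/-!
A point `x` on the boundary of a component of the open set `f^[k] ⁻¹' V` lies on the boundary of
`f^[k] ⁻¹' V` itself, so `f^[k] x ∈ ∂V`. If `x` were in `f^[l] ⁻¹' V`, then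
`f^[l - k] (f^[k] x) ∈ V`, which niceness of `V` forbids.
-/

open Set Function

theorem IsOpen.frontier_connectedComponentIn_subset {X : Type*} [TopologicalSpace X]
    [LocallyConnectedSpace X] {U : Set X} (hU : IsOpen U) (x : X) :
    frontier (connectedComponentIn U x) ⊆ frontier U := by
  intro y hy
  have hy_closure : y ∈ closure (connectedComponentIn U x) := frontier_subset_closure hy
  rw [hU.frontier_eq]
  refine ⟨closure_mono (connectedComponentIn_subset U x) hy_closure, fun hyU => ?_⟩
  obtain ⟨z, hzy, hzx⟩ := mem_closure_iff.mp hy_closure _ hU.connectedComponentIn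
    (mem_connectedComponentIn hyU)
  have hcomp : connectedComponentIn U y = connectedComponentIn U x :=
    (connectedComponentIn_eq hzy).trans (connectedComponentIn_eq hzx).symm
  rw [hU.connectedComponentIn.frontier_eq] at hy
  exact hy.2 (hcomp ▸ mem_connectedComponentIn hyU)

theorem disjoint_frontier_preimage_iterate_preimage_iterate {X : Type*} [TopologicalSpace X]
    {f : X → X} (hf : Continuous f) {V : Set X}
    (hnice : ∀ n : ℕ, 1 ≤ n → (f^[n] '' frontier V) ∩ V = ∅) {k l : ℕ} (hkl : k < l) :
    Disjoint (frontier (f^[k] ⁻¹' V)) (f^[l] ⁻¹' V) := by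
  refine disjoint_left.mpr fun x hxk hxl => ?_
  have hfront : f^[k] x ∈ frontier V := (hf.iterate k).frontier_preimage_subset V hxk
  have himage : f^[l] x ∈ f^[l - k] '' frontier V :=
    ⟨f^[k] x, hfront, by rw [← iterate_add_apply, Nat.sub_add_cancel hkl.le]⟩
  exact (eq_empty_iff_forall_notMem.mp (hnice (l - k) (by omega))) _ ⟨himage, hxl⟩

theorem nice_interval_preimage_components_boundary_disjoint_general
    (f : ℝ → ℝ) (hf : Continuous f) (a b : ℝ)
    (V : Set ℝ) (hV : V = Set.Ioo a b)
    (hnice : ∀ n : ℕ, 1 ≤ n → (f^[n] '' frontier V) ∩ V = ∅)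
    (k l : ℕ) (hkl : k < l)
    (A B : Set ℝ)
    (hA : ∃ x ∈ f^[k] ⁻¹' V, A = connectedComponentIn (f^[k] ⁻¹' V) x)
    (hB : ∃ x ∈ f^[l] ⁻¹' V, B = connectedComponentIn (f^[l] ⁻¹' V) x) :
    frontier A ∩ B = ∅ := by
  obtain ⟨x, -, rfl⟩ := hA
  obtain ⟨y, -, rfl⟩ := hB
  have hVopen : IsOpen V := hV ▸ isOpen_Ioo
  refine disjoint_iff_inter_eq_empty.mp <|
    (disjoint_frontier_preimage_iterate_preimage_iterate hf hnice hkl).mono ?_ ?_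
  · exact (hVopen.preimage (hf.iterate k)).frontier_connectedComponentIn_subset x
  · exact connectedComponentIn_subset _ y

theorem nice_interval_preimage_components_boundary_disjoint
    (f : ℝ → ℝ) (hf : Continuous f) (a b : ℝ) (hab : a < b)
    (V : Set ℝ) (hV : V = Set.Ioo a b)
    (hnice : ∀ n : ℕ, 1 ≤ n → (f^[n] '' frontier V) ∩ V = ∅)
    (k l : ℕ) (hkl : k < l)
    (A B : Set ℝ)
    (hA : ∃ x ∈ f^[k] ⁻¹' V, A = connectedComponentIn (f^[k] ⁻¹' V) x)
    (hB : ∃ x ∈ f^[l] ⁻¹' V, B = connectedComponentIn (f^[l] ⁻¹' V) x) :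
    frontier A ∩ B = ∅ :=
  nice_interval_preimage_components_boundary_disjoint_general f hf a b V hV hnice k l hkl A B hA hB
end

section
/- Let f : ℝ → ℝ be continuous and let V be a nonempty bounded open interval such that f^n(∂V) ∩ V = ∅ for every n ≥ 1 (V is a 'nice' interval). Let D = {x ∈ V : there exists n ≥ 1 with f^n(x) ∈ V} be the domain of the first return map to V, and for x ∈ D let r(x) = min{n ≥ 1 : f^n(x) ∈ V} be the first return time. Then r is constant on each connected component of D. -/
/-!
Let `S` be a connected set of points that all return to the open set `V`, and let `N` be the
least time at which some point of `S` lands in `V`. The connected set `f^N(S)` meets `V` and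
misses `∂V`: if `f^N(w) ∈ ∂V`, then `w` cannot return at time `N` since `V` is open, nor at a
later time `m`, since `f^m(w) ∈ f^(m-N)(∂V)` and `V` is nice. Hence `f^N(S) ⊆ V`, so every
point of `S` returns at time `N`, and by minimality of `N` not earlier.
-/

open Set Function

variable {X : Type*} [TopologicalSpace X] {f : X → X} {V : Set X}

def returnTimes (f : X → X) (V : Set X) (x : X) : Set ℕ := {n | 1 ≤ n ∧ f^[n] x ∈ V}

lemma iterate_notMem_of_iterate_mem_frontier (hVo : IsOpen V)
    (hnice : ∀ n : ℕ, 1 ≤ n → (f^[n] '' frontier V) ∩ V = ∅) {w : X} {N m : ℕ}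
    (hN : f^[N] w ∈ frontier V) (hNm : N ≤ m) : f^[m] w ∉ V := by
  intro hm
  rcases hNm.eq_or_lt with rfl | hlt
  · exact hVo.inter_frontier_eq.subset ⟨hm, hN⟩
  · have hsplit : f^[m - N] (f^[N] w) = f^[m] w := by
      rw [← iterate_add_apply, Nat.sub_add_cancel hNm]
    have hmem : f^[m] w ∈ (f^[m - N] '' frontier V) ∩ V := ⟨⟨_, hN, hsplit⟩, hm⟩
    rwa [hnice (m - N) (by omega)] at hmem

lemma IsPreconnected.mapsTo_iterate_sInf_returnTimes (hf : Continuous f) (hVo : IsOpen V)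
    (hnice : ∀ n : ℕ, 1 ≤ n → (f^[n] '' frontier V) ∩ V = ∅) {S : Set X}
    (hS : IsPreconnected S) (hret : ∀ z ∈ S, (returnTimes f V z).Nonempty) (hne : S.Nonempty) :
    MapsTo f^[sInf (⋃ z ∈ S, returnTimes f V z)] S V := by
  set N := sInf (⋃ z ∈ S, returnTimes f V z)
  have hfirst : ∀ w ∈ S, ∀ m ∈ returnTimes f V w, N ≤ m :=
    fun w hw m hm => Nat.sInf_le (mem_biUnion hw hm)
  obtain ⟨z, hz⟩ := hne
  obtain ⟨n, hn⟩ := hret z hz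
  obtain ⟨z₀, hz₀, hz₀N⟩ := mem_iUnion₂.1 (Nat.sInf_mem ⟨n, mem_biUnion hz hn⟩)
  rw [mapsTo_iff_image_subset]
  refine (hS.image _ (hf.iterate N).continuousOn).subset_of_closure_inter_subset hVo
    ⟨_, mem_image_of_mem _ hz₀, hz₀N.2⟩ ?_
  rintro _ ⟨hcl, w, hw, rfl⟩
  rw [closure_eq_self_union_frontier] at hcl
  refine hcl.resolve_right fun hfr => ?_
  obtain ⟨m, hm⟩ := hret w hw
  exact iterate_notMem_of_iterate_mem_frontier hVo hnice hfr (hfirst w hw m hm) hm.2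

lemma IsPreconnected.sInf_returnTimes_eq (hf : Continuous f) (hVo : IsOpen V)
    (hnice : ∀ n : ℕ, 1 ≤ n → (f^[n] '' frontier V) ∩ V = ∅) {S : Set X}
    (hS : IsPreconnected S) (hret : ∀ z ∈ S, (returnTimes f V z).Nonempty) {x y : X}
    (hx : x ∈ S) (hy : y ∈ S) : sInf (returnTimes f V x) = sInf (returnTimes f V y) := by
  set N := sInf (⋃ z ∈ S, returnTimes f V z)
  have hmaps := hS.mapsTo_iterate_sInf_returnTimes hf hVo hnice hret ⟨x, hx⟩
  obtain ⟨n, hn⟩ := hret x hx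
  obtain ⟨-, -, hN₁, -⟩ := mem_iUnion₂.1 (Nat.sInf_mem ⟨n, mem_biUnion hx hn⟩)
  have hsInf_eq : ∀ z ∈ S, sInf (returnTimes f V z) = N := fun z hz =>
    le_antisymm (Nat.sInf_le ⟨hN₁, hmaps hz⟩)
      (le_csInf (hret z hz) fun m hm => Nat.sInf_le (mem_biUnion hz hm))
  rw [hsInf_eq x hx, hsInf_eq y hy]

theorem return_time_constant_on_components_general
    (f : ℝ → ℝ) (hf : Continuous f) (a b : ℝ)
    (V : Set ℝ) (hV : V = Set.Ioo a b)
    (hnice : ∀ n : ℕ, 1 ≤ n → (f^[n] '' frontier V) ∩ V = ∅)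
    (D : Set ℝ) (hD : D = {x ∈ V | ∃ n : ℕ, 1 ≤ n ∧ f^[n] x ∈ V})
    (r : ℝ → ℕ) (hr : ∀ x ∈ D, r x = sInf {n : ℕ | 1 ≤ n ∧ f^[n] x ∈ V}) :
    ∀ x ∈ D, ∀ y ∈ D, y ∈ connectedComponentIn D x → r x = r y := by
  intro x hx y hy hyx
  have hVo : IsOpen V := hV ▸ isOpen_Ioo
  have hret : ∀ z ∈ connectedComponentIn D x, (returnTimes f V z).Nonempty := by
    intro z hz
    have hzD := connectedComponentIn_subset D x hz
    rw [hD] at hzD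
    exact hzD.2
  rw [hr x hx, hr y hy]
  exact isPreconnected_connectedComponentIn.sInf_returnTimes_eq hf hVo hnice hret
    (mem_connectedComponentIn hx) hyx

theorem return_time_constant_on_components
    (f : ℝ → ℝ) (hf : Continuous f) (a b : ℝ) (hab : a < b)
    (V : Set ℝ) (hV : V = Set.Ioo a b)
    (hnice : ∀ n : ℕ, 1 ≤ n → (f^[n] '' frontier V) ∩ V = ∅)
    (D : Set ℝ) (hD : D = {x ∈ V | ∃ n : ℕ, 1 ≤ n ∧ f^[n] x ∈ V})
    (r : ℝ → ℕ) (hr : ∀ x ∈ D, r x = sInf {n : ℕ | 1 ≤ n ∧ f^[n] x ∈ V}) :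
    ∀ x ∈ D, ∀ y ∈ D, y ∈ connectedComponentIn D x → r x = r y :=
  return_time_constant_on_components_general f hf a b V hV hnice D hD r hr
end

section
/- Let f₄(x) = 4x(1 − x) be the Chebyshev quadratic map on [0,1]. Then every ergodic f₄-invariant Borel probability measure μ on [0,1] other than the Dirac mass δ₀ at the fixed point 0 satisfies: the function x ↦ log|f₄'(x)| = log|4 − 8x| is μ-integrable and the Lyapunov exponent χ_μ = ∫ log|f₄'| dμ equals log 2. -/
open MeasureTheory Set Filter Topology

/-!
The potential `φ x = -log (x (1 - x))` (`chebyshevPotential`), which up to a constant is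
twice the logarithm of the arcsine density `1 / (π √(x (1 - x)))` of `f₄`, solves the
cohomological equation `φ (f₄ x) - φ x = log 4 - 2 log |f₄' x|` off `{0, 1, 1/2}`. The
right-hand side is bounded below on `[0, 1]`, and a coboundary `φ ∘ f - φ` bounded below by an
integrable function is integrable with integral zero: truncate `φ` at height `n`, then apply
Fatou and dominated convergence. Hence `χ_μ = log 2` once `μ` has no atoms at `0, 1, 1/2`.
These points lie in the backward orbit of the fixed point `0`, which is invariant, so
ergodicity and `μ ≠ δ₀` exclude such atoms.
-/

def truncate (n : ℕ) (t : ℝ) : ℝ := max (-n) (min t n)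

lemma continuous_truncate (n : ℕ) : Continuous (truncate n) := by
  unfold truncate; fun_prop

lemma abs_truncate_le (n : ℕ) (t : ℝ) : |truncate n t| ≤ n :=
  abs_le.2 ⟨le_max_left _ _,
    max_le (by linarith [n.cast_nonneg (α := ℝ)]) (min_le_right _ _)⟩

lemma truncate_sub_truncate_le (n : ℕ) (s t : ℝ) :
    truncate n s - truncate n t ≤ max (s - t) 0 := by
  unfold truncate
  simp only [max_def, min_def]
  split_ifs <;> linarith

lemma min_le_truncate_sub_truncate (n : ℕ) (s t : ℝ) :
    min (s - t) 0 ≤ truncate n s - truncate n t := by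
  unfold truncate
  simp only [max_def, min_def]
  split_ifs <;> linarith

lemma abs_truncate_sub_truncate_le (n : ℕ) (s t : ℝ) :
    |truncate n s - truncate n t| ≤ |s - t| :=
  abs_le.2 ⟨(le_min (neg_abs_le _) (neg_nonpos.2 (abs_nonneg _))).trans
      (min_le_truncate_sub_truncate n s t),
    (truncate_sub_truncate_le n s t).trans (max_le (le_abs_self _) (abs_nonneg _))⟩

lemma neg_abs_le_truncate_sub_truncate (n : ℕ) {a s t : ℝ} (h : a ≤ s - t) :
    -|a| ≤ truncate n s - truncate n t :=
  (le_min (by linarith [neg_abs_le a]) (neg_nonpos.2 (abs_nonneg a))).trans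
    (min_le_truncate_sub_truncate n s t)

lemma tendsto_truncate (t : ℝ) : Tendsto (fun n : ℕ => truncate n t) atTop (𝓝 t) := by
  refine tendsto_const_nhds.congr' ?_
  filter_upwards [eventually_ge_atTop ⌈|t|⌉₊] with n hn
  have := abs_le.1 ((Nat.le_ceil _).trans (Nat.cast_le.2 hn))
  simp [truncate, min_eq_left this.2, max_eq_right this.1]

lemma MeasureTheory.integrable_truncate_comp {α : Type*} [MeasurableSpace α] {μ : Measure α}
    [IsFiniteMeasure μ] {φ : α → ℝ} (hφ : AEStronglyMeasurable φ μ) (n : ℕ) :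
    Integrable (fun x => truncate n (φ x)) μ :=
  .of_bound ((continuous_truncate n).comp_aestronglyMeasurable hφ) n
    (ae_of_all _ fun _ => abs_truncate_le n _)

namespace MeasureTheory.MeasurePreserving

variable {α : Type*} [MeasurableSpace α] {μ : Measure α} [IsFiniteMeasure μ] {f : α → α}
  {φ g : α → ℝ}

lemma integrable_truncate_comp_sub (hf : MeasurePreserving f μ μ)
    (hφ : AEStronglyMeasurable φ μ) (n : ℕ) :
    Integrable (fun x => truncate n (φ (f x)) - truncate n (φ x)) μ :=
  (integrable_truncate_comp (φ := fun x => φ (f x)) (hφ.comp_measurePreserving hf) n).sub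
    (integrable_truncate_comp hφ n)

lemma integral_truncate_comp_sub (hf : MeasurePreserving f μ μ)
    (hφ : AEStronglyMeasurable φ μ) (n : ℕ) :
    ∫ x, truncate n (φ (f x)) - truncate n (φ x) ∂μ = 0 := by
  have hT : AEStronglyMeasurable (fun x => truncate n (φ x)) (μ.map f) := by
    rw [hf.map_eq]; exact (continuous_truncate n).comp_aestronglyMeasurable hφ
  rw [integral_sub (integrable_truncate_comp (φ := fun x => φ (f x))
      (hφ.comp_measurePreserving hf) n) (integrable_truncate_comp hφ n), sub_eq_zero,
    ← integral_map hf.aemeasurable hT, hf.map_eq]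

lemma lintegral_ofReal_comp_sub_add_abs_le (hf : MeasurePreserving f μ μ)
    (hφ : AEStronglyMeasurable φ μ) (hg : Integrable g μ)
    (hle : ∀ᵐ x ∂μ, g x ≤ φ (f x) - φ x) :
    ∫⁻ x, ENNReal.ofReal (φ (f x) - φ x + |g x|) ∂μ
      ≤ ENNReal.ofReal (∫ x, |g x| ∂μ) := by
  set D : ℕ → α → ℝ := fun n x => truncate n (φ (f x)) - truncate n (φ x) + |g x|
  have hD : ∀ n, Integrable (D n) μ := fun n =>
    (hf.integrable_truncate_comp_sub hφ n).add hg.abs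
  have hD_lintegral :
      ∀ n, ∫⁻ x, ENNReal.ofReal (D n x) ∂μ = ENNReal.ofReal (∫ x, |g x| ∂μ) := by
    intro n
    have hD_nonneg : 0 ≤ᵐ[μ] D n := by
      filter_upwards [hle] with x hx
      simp only [Pi.zero_apply, D]
      linarith [neg_abs_le_truncate_sub_truncate n hx]
    rw [← ofReal_integral_eq_lintegral_ofReal (hD n) hD_nonneg,
      integral_add (hf.integrable_truncate_comp_sub hφ n) hg.abs,
      integral_truncate_comp_sub hf hφ, zero_add]
  have hlim : ∀ x, Tendsto (fun n => ENNReal.ofReal (D n x)) atTop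
      (𝓝 (ENNReal.ofReal (φ (f x) - φ x + |g x|))) := fun x =>
    (ENNReal.continuous_ofReal.tendsto _).comp
      (((tendsto_truncate _).sub (tendsto_truncate _)).add_const _)
  calc ∫⁻ x, ENNReal.ofReal (φ (f x) - φ x + |g x|) ∂μ
      = ∫⁻ x, liminf (fun n => ENNReal.ofReal (D n x)) atTop ∂μ :=
        lintegral_congr fun x => (hlim x).liminf_eq.symm
    _ ≤ liminf (fun n => ∫⁻ x, ENNReal.ofReal (D n x) ∂μ) atTop :=
        lintegral_liminf_le' fun n => (hD n).aemeasurable.ennreal_ofReal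
    _ = ENNReal.ofReal (∫ x, |g x| ∂μ) := by simp only [hD_lintegral, liminf_const]

lemma integrable_comp_sub_of_le (hf : MeasurePreserving f μ μ) (hφ : AEStronglyMeasurable φ μ)
    (hg : Integrable g μ) (hle : ∀ᵐ x ∂μ, g x ≤ φ (f x) - φ x) :
    Integrable (fun x => φ (f x) - φ x) μ := by
  have hψ_nonneg : 0 ≤ᵐ[μ] fun x => φ (f x) - φ x + |g x| := by
    filter_upwards [hle] with x hx
    simp only [Pi.zero_apply]
    linarith [neg_abs_le (g x)]
  have hψg : Integrable (fun x => φ (f x) - φ x + |g x|) μ :=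
    ⟨((hφ.comp_measurePreserving hf).sub hφ).add hg.abs.aestronglyMeasurable,
      (hasFiniteIntegral_iff_ofReal hψ_nonneg).2
        ((hf.lintegral_ofReal_comp_sub_add_abs_le hφ hg hle).trans_lt ENNReal.ofReal_lt_top)⟩
  exact (hψg.sub hg.abs).congr (ae_of_all _ fun x => by simp)

lemma integral_comp_sub_eq_zero_of_le (hf : MeasurePreserving f μ μ)
    (hφ : AEStronglyMeasurable φ μ) (hg : Integrable g μ)
    (hle : ∀ᵐ x ∂μ, g x ≤ φ (f x) - φ x) :
    ∫ x, φ (f x) - φ x ∂μ = 0 := by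
  have h := tendsto_integral_of_dominated_convergence (fun x => |φ (f x) - φ x|)
    (fun n => (hf.integrable_truncate_comp_sub hφ n).aestronglyMeasurable)
    (hf.integrable_comp_sub_of_le hφ hg hle).abs
    (fun n => ae_of_all _ fun x => abs_truncate_sub_truncate_le n _ _)
    (ae_of_all _ fun x => (tendsto_truncate _).sub (tendsto_truncate _))
  simp only [integral_truncate_comp_sub hf hφ] at h
  exact tendsto_nhds_unique h tendsto_const_nhds

end MeasureTheory.MeasurePreserving

namespace MeasureTheory

variable {α : Type*} [MeasurableSpace α] {μ : Measure α} {f : α → α}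

lemma eq_dirac_of_measure_singleton_eq_one [MeasurableSingletonClass α] [IsProbabilityMeasure μ]
    {p : α} (h : μ {p} = 1) :
    μ = Measure.dirac p := by
  have hp : ∀ᵐ x ∂μ, x ∈ ({p} : Set α) :=
    (prob_compl_eq_zero_iff (measurableSet_singleton p)).2 h
  rw [← Measure.restrict_eq_self_of_ae_mem hp, Measure.restrict_singleton, h, one_smul]

lemma Measure.QuasiMeasurePreserving.measure_singleton_eq_zero_of_apply
    (hf : Measure.QuasiMeasurePreserving f μ μ) {x : α} (h : μ {f x} = 0) : μ {x} = 0 :=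
  measure_mono_null (fun y hy => by simp_all) (hf.preimage_null h)

lemma MeasurePreserving.measure_singleton_eq_zero_of_ergodic [MeasurableSingletonClass α]
    [IsProbabilityMeasure μ]
    (hf : MeasurePreserving f μ μ)
    (herg : ∀ E : Set α, MeasurableSet E → f ⁻¹' E = E → μ E = 0 ∨ μ E = 1)
    {p : α} (hp : f p = p) (hne : μ ≠ Measure.dirac p) : μ {p} = 0 := by
  set s : ℕ → Set α := fun n => f^[n] ⁻¹' {p}
  have hs : Monotone s := monotone_nat_of_le_succ fun n x hx => by
    simp only [s, mem_preimage, mem_singleton_iff] at hx ⊢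
    rw [Function.iterate_succ_apply', hx, hp]
  have hE : μ (⋃ n, s n) = μ {p} := by
    rw [hs.measure_iUnion]
    simp [s, fun n => (hf.iterate n).measure_preimage (measurableSet_singleton p).nullMeasurableSet]
  have hE_inv : f ⁻¹' ⋃ n, s n = ⋃ n, s n := by
    rw [preimage_iUnion]
    exact hs.iUnion_nat_add 1
  rcases herg _ (.iUnion fun n => hf.measurable.iterate n (measurableSet_singleton p)) hE_inv
    with h | h
  · rwa [← hE]
  · exact absurd (eq_dirac_of_measure_singleton_eq_one (hE ▸ h)) hne

end MeasureTheory

noncomputable def chebyshevPotential (x : ℝ) : ℝ := -Real.log (x * (1 - x))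

lemma measurable_chebyshevPotential : Measurable chebyshevPotential := by
  unfold chebyshevPotential; fun_prop

lemma chebyshevPotential_comp_sub {x : ℝ} (hx₀ : x ≠ 0) (hx₁ : x ≠ 1)
    (hx : 4 - 8 * x ≠ 0) :
    chebyshevPotential (4 * x * (1 - x)) - chebyshevPotential x =
      Real.log 4 - 2 * Real.log |4 - 8 * x| := by
  have hx₁' : 1 - x ≠ 0 := sub_ne_zero.2 hx₁.symm
  rw [chebyshevPotential, chebyshevPotential,
    show 4 * x * (1 - x) * (1 - 4 * x * (1 - x)) = x * (1 - x) * (4 - 8 * x) ^ 2 / 4 by ring,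
    Real.log_div (by positivity) four_ne_zero, Real.log_mul (by positivity) (by positivity),
    Real.log_pow, Real.log_abs]
  push_cast
  ring

lemma neg_log_four_le_chebyshevPotential_comp_sub {x : ℝ} (hx : x ∈ Icc 0 1) (hx₀ : x ≠ 0)
    (hx₁ : x ≠ 1) (hx₂ : 4 - 8 * x ≠ 0) :
    -Real.log 4 ≤ chebyshevPotential (4 * x * (1 - x)) - chebyshevPotential x := by
  have : Real.log |4 - 8 * x| ≤ Real.log 4 :=
    Real.log_le_log (abs_pos.2 hx₂) (abs_le.2 ⟨by linarith [hx.2], by linarith [hx.1]⟩)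
  rw [chebyshevPotential_comp_sub hx₀ hx₁ hx₂]
  linarith

lemma ae_chebyshev_regular {μ : Measure ℝ} [IsProbabilityMeasure μ]
    (hf : MeasurePreserving (fun x : ℝ => 4 * x * (1 - x)) μ μ) (hsupp : μ (Icc 0 1) = 1)
    (herg : ∀ E : Set ℝ, MeasurableSet E → (fun x : ℝ => 4 * x * (1 - x)) ⁻¹' E = E →
      μ E = 0 ∨ μ E = 1)
    (hne : μ ≠ Measure.dirac 0) :
    ∀ᵐ x ∂μ, x ∈ Icc 0 1 ∧ x ≠ 0 ∧ x ≠ 1 ∧ 4 - 8 * x ≠ 0 := by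
  have h₀ : μ {0} = 0 := hf.measure_singleton_eq_zero_of_ergodic herg (by norm_num) hne
  have h₁ : μ {1} = 0 :=
    hf.quasiMeasurePreserving.measure_singleton_eq_zero_of_apply (by norm_num [h₀])
  have h₂ : μ {1 / 2} = 0 :=
    hf.quasiMeasurePreserving.measure_singleton_eq_zero_of_apply (by norm_num [h₁])
  filter_upwards [(prob_compl_eq_zero_iff measurableSet_Icc).2 hsupp,
    measure_eq_zero_iff_ae_notMem.1 h₀, measure_eq_zero_iff_ae_notMem.1 h₁,
    measure_eq_zero_iff_ae_notMem.1 h₂] with x hx hx₀ hx₁ hx₂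
  refine ⟨hx, hx₀, hx₁, fun h => hx₂ ?_⟩
  rw [mem_singleton_iff]
  linarith

theorem chebyshev_lyapunov_exponent
    (f₄ : ℝ → ℝ) (hf : ∀ x, f₄ x = 4 * x * (1 - x))
    (μ : Measure ℝ) [IsProbabilityMeasure μ]
    (hsupp : μ (Icc 0 1) = 1)
    (hinv : Measure.map f₄ μ = μ)
    (herg : ∀ E : Set ℝ, MeasurableSet E → f₄ ⁻¹' E = E → μ E = 0 ∨ μ E = 1)
    (hne : μ ≠ Measure.dirac 0) :
    Integrable (fun x => Real.log |4 - 8 * x|) μ ∧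
    ∫ x, Real.log |4 - 8 * x| ∂μ = Real.log 2 := by
  obtain rfl : f₄ = fun x => 4 * x * (1 - x) := funext hf
  have hf : MeasurePreserving (fun x : ℝ => 4 * x * (1 - x)) μ μ := ⟨by fun_prop, hinv⟩
  have hae := ae_chebyshev_regular hf hsupp herg hne
  have hφ := measurable_chebyshevPotential.aestronglyMeasurable (μ := μ)
  have hle : ∀ᵐ x ∂μ, -Real.log 4 ≤
      chebyshevPotential (4 * x * (1 - x)) - chebyshevPotential x := by
    filter_upwards [hae] with x ⟨hx, hx₀, hx₁, hx₂⟩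
    exact neg_log_four_le_chebyshevPotential_comp_sub hx hx₀ hx₁ hx₂
  have hint := hf.integrable_comp_sub_of_le hφ (integrable_const _) hle
  have hzero := hf.integral_comp_sub_eq_zero_of_le hφ (integrable_const _) hle
  have heq : (fun x => Real.log |4 - 8 * x|) =ᵐ[μ] fun x =>
      (Real.log 4 - (chebyshevPotential (4 * x * (1 - x)) - chebyshevPotential x)) / 2 := by
    filter_upwards [hae] with x ⟨_, hx₀, hx₁, hx₂⟩
    rw [chebyshevPotential_comp_sub hx₀ hx₁ hx₂]
    ring
  refine ⟨(((integrable_const _).sub hint).div_const 2).congr heq.symm, ?_⟩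
  rw [integral_congr_ae heq, integral_div, integral_sub (integrable_const _) hint, hzero,
    integral_const, show (4 : ℝ) = 2 ^ 2 by norm_num, Real.log_pow]
  simp
end

section
/- Let a ∈ (3,4) and let f_a(x) = a·x·(1 − x). Let μ be an ergodic f_a-invariant Borel probability measure on [0,1] with μ ≠ δ₀, and suppose that log|f_a'| is μ-integrable. Then the Lyapunov exponent satisfies χ_μ = ∫ log|f_a'| dμ < log a. (Thus the Lyapunov exponents of all invariant measures other than the Dirac mass at 0 are bounded away from log a = χ_{δ₀}, which produces the phase transition of Proposition 1 in the negative spectrum.) -/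
/-!
On `[0,1]` we have `a * |1 - 2x| ≤ a`, with equality only at the two preimages `0, 1` of the
fixed point `0`. Hence `χ_μ ≤ log a`, and equality forces `μ` to be carried by `f⁻¹' {0}`, so that
`μ = f_* μ = δ₀` by invariance.
-/

open MeasureTheory Set

theorem MeasureTheory.Measure.eq_dirac_of_map_eq_self_of_ae_eq_const {α : Type*}
    [MeasurableSpace α] {μ : Measure α} [IsProbabilityMeasure μ] {f : α → α} {c : α}
    (hinv : μ.map f = μ) (hf : f =ᵐ[μ] fun _ ↦ c) : μ = Measure.dirac c := by
  rw [← hinv, Measure.map_congr hf, Measure.map_const, measure_univ, one_smul]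

-- For `x = 1/2` the left-hand side is the junk value `log 0 = 0`, whence `1 ≤ a`.
theorem Real.log_mul_abs_one_sub_two_mul_le {a x : ℝ} (ha : 1 ≤ a) (hx : x ∈ Icc 0 1) :
    Real.log (a * |1 - 2 * x|) ≤ Real.log a := by
  rcases (abs_nonneg (1 - 2 * x)).eq_or_lt with h0 | h0
  · rw [← h0, mul_zero, Real.log_zero]
    exact Real.log_nonneg ha
  · have h1 : |1 - 2 * x| ≤ 1 := abs_le.2 ⟨by linarith [hx.2], by linarith [hx.1]⟩
    exact Real.log_le_log (by positivity) (by nlinarith)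

theorem Real.eq_zero_or_eq_one_of_log_mul_abs_one_sub_two_mul_eq {a x : ℝ} (ha : 1 < a)
    (h : Real.log (a * |1 - 2 * x|) = Real.log a) : x = 0 ∨ x = 1 := by
  have ha0 : 0 < a := by linarith
  have hpos : 0 < |1 - 2 * x| := by
    refine (abs_nonneg _).lt_of_ne fun h0 ↦ ?_
    rw [← h0, mul_zero, Real.log_zero] at h
    exact (Real.log_pos ha).ne h
  have habs : |1 - 2 * x| = 1 := by
    have := Real.log_injOn_pos (mul_pos ha0 hpos) ha0 h
    nlinarith
  rcases abs_eq zero_le_one |>.1 habs with h1 | h1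
  · left; linarith
  · right; linarith

theorem lyapunov_exponent_lt_log_a_general
    (a : ℝ) (ha : a ∈ Ioo (3 : ℝ) 4)
    (f : ℝ → ℝ) (hf : ∀ x, f x = a * x * (1 - x))
    (μ : Measure ℝ) [IsProbabilityMeasure μ]
    (hconc : μ (Icc 0 1) = 1)
    (hinv : Measure.map f μ = μ)
    (hne : μ ≠ Measure.dirac 0)
    (hint : Integrable (fun x => Real.log (a * |1 - 2 * x|)) μ) :
    ∫ x, Real.log (a * |1 - 2 * x|) ∂μ < Real.log a := by
  have ha1 : 1 < a := by linarith [ha.1]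
  have hmem : ∀ᵐ x ∂μ, x ∈ Icc (0 : ℝ) 1 :=
    (ae_iff_measure_eq measurableSet_Icc.nullMeasurableSet).2 (hconc.trans measure_univ.symm)
  have hle : (fun x ↦ Real.log (a * |1 - 2 * x|)) ≤ᵐ[μ] fun _ ↦ Real.log a :=
    hmem.mono fun x hx ↦ Real.log_mul_abs_one_sub_two_mul_le ha1.le hx
  refine ((integral_mono_ae hint (integrable_const _) hle).trans_eq (by simp)).lt_of_ne
    fun heq ↦ hne (Measure.eq_dirac_of_map_eq_self_of_ae_eq_const hinv ?_)
  have hconst : (fun x ↦ Real.log (a * |1 - 2 * x|)) =ᵐ[μ] fun _ ↦ Real.log a :=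
    (integral_eq_iff_of_ae_le hint (integrable_const _) hle).1 (by simpa using heq)
  filter_upwards [hconst] with x hx
  rcases Real.eq_zero_or_eq_one_of_log_mul_abs_one_sub_two_mul_eq ha1 hx with rfl | rfl <;>
    simp [hf]

theorem lyapunov_exponent_lt_log_a
    (a : ℝ) (ha : a ∈ Ioo (3 : ℝ) 4)
    (f : ℝ → ℝ) (hf : ∀ x, f x = a * x * (1 - x))
    (μ : Measure ℝ) [IsProbabilityMeasure μ]
    (hconc : μ (Icc 0 1) = 1)
    (hinv : Measure.map f μ = μ)
    (herg : ∀ E : Set ℝ, MeasurableSet E → f ⁻¹' E = E → μ E = 0 ∨ μ E = 1)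
    (hne : μ ≠ Measure.dirac 0)
    (hint : Integrable (fun x => Real.log (a * |1 - 2 * x|)) μ) :
    ∫ x, Real.log (a * |1 - 2 * x|) ∂μ < Real.log a :=
  lyapunov_exponent_lt_log_a_general a ha f hf μ hconc hinv hne hint
end

section
/- Let f : [0,1] → [0,1] be a continuous map for which there exists c ∈ [0,1] such that f is monotone on [0,c] and monotone on [c,1] (f has at most two branches of monotonicity). Then the topological entropy of f is at most log 2. -/
/-!
Split the orbits by their itinerary: which side of `c` each of `x, f x, …, f^[n-1] x` lies on.
On the points sharing an itinerary every `f^[k]`, `k < n`, is monotone or antitone. If such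
points form an `(n, ε)`-separated set, list them in increasing order: each consecutive pair is
separated at some time `k < n`, and a monotone sequence in `[0, 1]` has at most `1/ε` jumps of
size `ε`. So an itinerary class holds at most `n ⌈1/ε⌉ + 1` points, a separated set at most
`2ⁿ (n ⌈1/ε⌉ + 1)`, and this grows at exponential rate `log 2`.
-/

open Set Dynamics Filter ENNReal ExpGrowth Finset

lemma expGrowthSup_natCast : expGrowthSup (fun n : ℕ ↦ (n : ℝ≥0∞)) = 0 := by
  have hlog : Tendsto (fun n : ℕ ↦ Real.log n / n) atTop (nhds 0) :=
    Real.isLittleO_log_id_atTop.tendsto_div_nhds_zero.comp tendsto_natCast_atTop_atTop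
  refine Tendsto.limsup_eq ((EReal.tendsto_coe.2 hlog).congr' ?_)
  filter_upwards [eventually_ge_atTop 1] with n hn
  rw [← ENNReal.ofReal_natCast, ENNReal.log_ofReal, if_neg (Nat.cast_pos.2 hn).not_ge,
    EReal.coe_div]
  rfl

lemma expGrowthSup_le_log_of_le_pow_mul {u : ℕ → ℝ≥0∞} {a M : ℝ≥0∞} (hM : M ≠ ⊤)
    (h : ∀ n, u n ≤ a ^ n * (n * M + 1)) : expGrowthSup u ≤ log a := by
  have hpoly : ∀ᶠ n : ℕ in atTop, u n ≤ (M + 1) * (a ^ n * n) := by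
    filter_upwards [eventually_ge_atTop 1] with n hn
    refine (h n).trans ?_
    calc a ^ n * (n * M + 1) ≤ a ^ n * (n * M + n) := by gcongr; exact_mod_cast hn
      _ = (M + 1) * (a ^ n * n) := by ring
  calc expGrowthSup u ≤ expGrowthSup ((fun n : ℕ ↦ a ^ n) * fun n : ℕ ↦ (n : ℝ≥0∞)) :=
        expGrowthSup_le_of_eventually_le (by finiteness) hpoly
    _ ≤ expGrowthSup (fun n : ℕ ↦ a ^ n) + expGrowthSup (fun n : ℕ ↦ (n : ℝ≥0∞)) := by
        apply expGrowthSup_mul_le <;> simp [expGrowthSup_natCast]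
    _ = log a := by rw [expGrowthSup_pow, expGrowthSup_natCast, add_zero]

lemma monotoneOn_or_antitoneOn_comp {α β γ : Type*} [Preorder α] [Preorder β] [Preorder γ]
    {g : β → γ} {h : α → β} {s : Set α} {t : Set β}
    (hg : MonotoneOn g t ∨ AntitoneOn g t) (hh : MonotoneOn h s ∨ AntitoneOn h s)
    (hst : MapsTo h s t) : MonotoneOn (g ∘ h) s ∨ AntitoneOn (g ∘ h) s := by
  rcases hg with hg | hg <;> rcases hh with hh | hh
  · exact .inl fun a ha b hb hab ↦ hg (hst ha) (hst hb) (hh ha hb hab)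
  · exact .inr fun a ha b hb hab ↦ hg (hst hb) (hst ha) (hh ha hb hab)
  · exact .inr fun a ha b hb hab ↦ hg (hst ha) (hst hb) (hh ha hb hab)
  · exact .inl fun a ha b hb hab ↦ hg (hst hb) (hst ha) (hh ha hb hab)

lemma monotoneOn_or_antitoneOn_iterate {α : Type*} [Preorder α] {f : α → α} {S : Set α} {n : ℕ}
    (hlap : ∀ j < n, ∃ I, (MonotoneOn f I ∨ AntitoneOn f I) ∧ MapsTo f^[j] S I) :
    ∀ k ≤ n, MonotoneOn f^[k] S ∨ AntitoneOn f^[k] S := by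
  intro k hk
  induction k with
  | zero => exact .inl fun _ _ _ _ h ↦ h
  | succ k ih =>
    obtain ⟨I, hI, hSI⟩ := hlap k hk
    rw [Function.iterate_succ']
    exact monotoneOn_or_antitoneOn_comp hI (ih (by omega)) hSI

lemma sum_range_dist_succ {v : ℕ → ℝ} (hv : Monotone v ∨ Antitone v) (N : ℕ) :
    ∑ i ∈ range N, dist (v (i + 1)) (v i) = dist (v N) (v 0) := by
  have key : ∀ w : ℕ → ℝ, Monotone w →
      ∑ i ∈ range N, dist (w (i + 1)) (w i) = dist (w N) (w 0) := by
    intro w hw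
    rw [Real.dist_eq, abs_of_nonneg (sub_nonneg.2 (hw N.zero_le)), ← sum_range_sub]
    exact sum_congr rfl fun i _ ↦ by
      rw [Real.dist_eq, abs_of_nonneg (sub_nonneg.2 (hw i.le_succ))]
  rcases hv with hv | hv
  · exact key v hv
  · simpa only [Pi.neg_apply, dist_neg_neg] using key (-v) hv.neg

lemma Finset.exists_monotone_enumeration {α : Type*} [LinearOrder α] (s : Finset α)
    (hs : s.Nonempty) :
    ∃ u : ℕ → α, Monotone u ∧ (∀ i, u i ∈ s) ∧ ∀ i < #s - 1, u i ≠ u (i + 1) := by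
  have hcard : #s = #s - 1 + 1 := (Nat.succ_pred_eq_of_pos hs.card_pos).symm
  let e := s.orderEmbOfFin hcard
  refine ⟨fun i ↦ e (Fin.clamp i _), fun i j hij ↦ e.monotone ?_,
    fun i ↦ s.orderEmbOfFin_mem hcard _, fun i hi h ↦ ?_⟩
  · simpa [Fin.clamp, Fin.le_def] using Or.inl hij
  · have := congrArg Fin.val (e.injective h)
    simp only [Fin.clamp] at this
    omega

theorem card_le_of_pairwise_exists_le_dist {α : Type*} [LinearOrder α] {g : ℕ → α → ℝ} {n : ℕ}
    {s : Finset α} {ε : ℝ} (hε : 0 < ε)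
    (hg : ∀ k < n, MonotoneOn (g k) s ∨ AntitoneOn (g k) s)
    (hg01 : ∀ k < n, ∀ x ∈ s, g k x ∈ Icc (0 : ℝ) 1)
    (hsep : (s : Set α).Pairwise fun x y ↦ ∃ k < n, ε ≤ dist (g k x) (g k y)) :
    #s ≤ n * ⌈ε⁻¹⌉₊ + 1 := by
  rcases s.eq_empty_or_nonempty with rfl | hs
  · simp
  obtain ⟨u, hu, hus, hu_ne⟩ := s.exists_monotone_enumeration hs
  choose! K hKn hK using fun i (hi : i < #s - 1) ↦ hsep (hus i) (hus (i + 1)) (hu_ne i hi)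
  have hjumps : ∀ k ∈ range n, #{i ∈ range (#s - 1) | K i = k} ≤ ⌈ε⁻¹⌉₊ := by
    intro k hk
    rw [Finset.mem_range] at hk
    let v i := g k (u i)
    have hv : Monotone v ∨ Antitone v := (hg k hk).imp
      (fun h i j hij ↦ h (hus i) (hus j) (hu hij)) (fun h i j hij ↦ h (hus i) (hus j) (hu hij))
    have hcount : #{i ∈ range (#s - 1) | K i = k} * ε ≤ 1 := by
      calc #{i ∈ range (#s - 1) | K i = k} * ε
          ≤ ∑ i ∈ range (#s - 1) with K i = k, dist (v (i + 1)) (v i) := by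
            rw [← nsmul_eq_mul]
            refine card_nsmul_le_sum _ _ _ fun i hi ↦ ?_
            rw [mem_filter, Finset.mem_range] at hi
            simpa [v, hi.2, dist_comm] using hK i hi.1
        _ ≤ ∑ i ∈ range (#s - 1), dist (v (i + 1)) (v i) :=
            sum_le_sum_of_subset_of_nonneg (filter_subset _ _) fun _ _ _ ↦ dist_nonneg
        _ = dist (v (#s - 1)) (v 0) := sum_range_dist_succ hv _
        _ ≤ 1 := Real.dist_le_of_mem_Icc_01 (hg01 k hk _ (hus _)) (hg01 k hk _ (hus _))
    have hle : (#{i ∈ range (#s - 1) | K i = k} : ℝ) ≤ ε⁻¹ := by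
      rwa [← one_div, le_div_iff₀ hε]
    exact_mod_cast hle.trans (Nat.le_ceil _)
  have hpairs := card_le_mul_card_image_of_maps_to
    (fun i hi ↦ Finset.mem_range.2 (hKn i (Finset.mem_range.1 hi))) _ hjumps
  rw [card_range, card_range, mul_comm] at hpairs
  omega

lemma IsDynNetIn.pairwise_exists_le_dist {X : Type*} [PseudoMetricSpace X] {T : X → X}
    {F s : Set X} {n : ℕ} {ε : ℝ} (hε : 0 < ε) (hs : IsDynNetIn T F {p | dist p.1 p.2 < ε} n s) :
    s.Pairwise fun x y ↦ ∃ k < n, ε ≤ dist (T^[k] x) (T^[k] y) := by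
  intro x hx y hy hxy
  by_contra! hclose
  refine hxy (hs.2.elim_set hx hy y (mem_ball_dynEntourage.2 fun k hk ↦ ?_)
    (mem_ball_dynEntourage.2 fun k _ ↦ ?_))
  · simpa [UniformSpace.ball] using hclose k hk
  · simpa [UniformSpace.ball] using hε

theorem netMaxcard_le_of_two_branches
    {f : Icc (0 : ℝ) 1 → Icc (0 : ℝ) 1} {c : Icc (0 : ℝ) 1}
    (h₁ : MonotoneOn f {x | x ≤ c} ∨ AntitoneOn f {x | x ≤ c})
    (h₂ : MonotoneOn f {x | c ≤ x} ∨ AntitoneOn f {x | c ≤ x})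
    (F : Set (Icc (0 : ℝ) 1)) {ε : ℝ} (hε : 0 < ε) (n : ℕ) :
    netMaxcard f F {p | dist p.1 p.2 < ε} n ≤ 2 ^ n * (n * ⌈ε⁻¹⌉₊ + 1) := by
  classical
  refine iSup₂_le fun s hs ↦ ?_
  let itinerary x (k : Fin n) : Bool := decide (f^[k] x ≤ c)
  have hfiber : ∀ w ∈ (univ : Finset (Fin n → Bool)),
      #{x ∈ s | itinerary x = w} ≤ n * ⌈ε⁻¹⌉₊ + 1 := by
    intro w _
    set t := {x ∈ s | itinerary x = w}
    have hlap : ∀ j < n, ∃ I, (MonotoneOn f I ∨ AntitoneOn f I) ∧ MapsTo f^[j] t I := by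
      intro j hj
      refine ⟨{y | decide (y ≤ c) = w ⟨j, hj⟩}, ?_, fun x hx ↦ ?_⟩
      · cases w ⟨j, hj⟩
        · simp only [decide_eq_false_iff_not, not_le]
          exact h₂.imp (·.mono Ioi_subset_Ici_self) (·.mono Ioi_subset_Ici_self)
        · simpa only [decide_eq_true_eq] using h₁
      · exact congrFun (mem_filter.1 hx).2 ⟨j, hj⟩
    refine card_le_of_pairwise_exists_le_dist hε (g := fun k x ↦ (f^[k] x : ℝ))
      (fun k hk ↦ ?_) (fun k _ x _ ↦ (f^[k] x).2) ?_
    · exact (monotoneOn_or_antitoneOn_iterate hlap k hk.le).imp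
        (Subtype.mono_coe _).comp_monotoneOn (Subtype.mono_coe _).comp_antitoneOn
    · exact (IsDynNetIn.pairwise_exists_le_dist hε hs).mono (filter_subset _ s)
  have := card_le_mul_card_image_of_maps_to (fun x _ ↦ mem_univ (itinerary x)) _ hfiber
  rw [card_univ, Fintype.card_fun, Fintype.card_bool, Fintype.card_fin, mul_comm] at this
  exact_mod_cast this

theorem entropy_le_log_two_of_two_branches_general
    (f : (Icc (0 : ℝ) 1) → (Icc (0 : ℝ) 1))
    (c : Icc (0 : ℝ) 1)
    (h₁ : MonotoneOn f {x | x ≤ c} ∨ AntitoneOn f {x | x ≤ c})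
    (h₂ : MonotoneOn f {x | c ≤ x} ∨ AntitoneOn f {x | c ≤ x}) :
    coverEntropy f univ ≤ (Real.log 2 : EReal) := by
  rw [coverEntropy_eq_iSup_basis_netEntropyEntourage Metric.uniformity_basis_dist]
  refine iSup₂_le fun ε hε ↦ ?_
  have hlog : ENNReal.log 2 = Real.log 2 := by
    rw [ENNReal.log_pos_real (by norm_num) (by norm_num), ENNReal.toReal_ofNat]
  rw [← hlog]
  refine expGrowthSup_le_log_of_le_pow_mul (M := ⌈ε⁻¹⌉₊) (by simp) fun n ↦ ?_
  exact_mod_cast ENat.toENNReal_le.2 (netMaxcard_le_of_two_branches h₁ h₂ univ hε n)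

theorem entropy_le_log_two_of_two_branches
    (f : (Icc (0 : ℝ) 1) → (Icc (0 : ℝ) 1)) (hf : Continuous f)
    (c : Icc (0 : ℝ) 1)
    (h₁ : MonotoneOn f {x | x ≤ c} ∨ AntitoneOn f {x | x ≤ c})
    (h₂ : MonotoneOn f {x | c ≤ x} ∨ AntitoneOn f {x | c ≤ x}) :
    coverEntropy f univ ≤ (Real.log 2 : EReal) :=
  entropy_le_log_two_of_two_branches_general f c h₁ h₂
end

section
/- Let a ∈ (1,3) and let f_a(x) = a·x·(1 − x). If x ∈ [0,1] and n ≥ 1 satisfy f_a^n(x) = x, then x = 0 or x = (a − 1)/a. In particular, f_a has exactly two periodic orbits in [0,1], namely the two fixed points. -/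
/-!
For `1 < a < 3` the function `V z = (a z - (a - 1))²`, which vanishes exactly at the nonzero fixed
point `p = (a - 1) / a`, is a strict Lyapunov function for `f ∘ f` on the invariant interval
`(0, a / 4]`: the difference `V z - V (f (f z))` factors as `a z · V z · Q(a z) · C(a z)` with a
quadratic `Q` of negative discriminant and a cubic `C` that is positive on `(0, a² / 4]`.
A nonzero periodic point in `[0, 1]` lies in `f [0, 1] ⊆ [0, a / 4]` and is periodic for `f ∘ f`;
since `V` strictly decreases along `f ∘ f`-orbits away from `p`, it must be `p`.
-/

open Set Function

theorem Function.IsPeriodicPt.eq_of_strict_lyapunov {α β : Type*} [Preorder β] {g : α → α}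
    {V : α → β} {s : Set α} {p x : α} {n : ℕ} (hx : IsPeriodicPt g n x) (hn : 0 < n)
    (hxs : x ∈ s) (hs : MapsTo g s s) (hp : IsFixedPt g p)
    (hV : ∀ z ∈ s, z ≠ p → V (g z) < V z) : x = p := by
  by_contra hxp
  have hle : ∀ z ∈ s, V (g z) ≤ V z := fun z hz => by
    rcases eq_or_ne z p with rfl | hzp
    · rw [hp.eq]
    · exact (hV z hz hzp).le
  have hanti : Antitone fun k => V (g^[k] x) := antitone_nat_of_succ_le fun k => by
    rw [iterate_succ_apply']
    exact hle _ (hs.iterate k hxs)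
  have hVx : V (g^[n] x) ≤ V (g^[1] x) := hanti (Nat.one_le_of_lt hn)
  rw [hx.eq, iterate_one] at hVx
  exact (hV x hxs hxp).not_ge hVx

theorem quadratic_pos_of_lt_three {a : ℝ} (ha1 : 1 < a) (ha3 : a < 3) (y : ℝ) :
    0 < y ^ 2 - (a + 1) * y + (a + 1) := by
  nlinarith [sq_nonneg (2 * y - (a + 1))]

theorem cubic_pos_of_le_sq_div_four {a y : ℝ} (ha1 : 1 < a) (ha3 : a < 3) (hy : 0 < y)
    (hya : 4 * y ≤ a ^ 2) : 0 < 2 - (a + 1) * y + (a + 1) * y ^ 2 - y ^ 3 := by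
  rcases le_or_gt y 1 with hy1 | hy1
  · nlinarith [mul_nonneg (mul_nonneg (by linarith : (0 : ℝ) ≤ 3 - a) hy.le)
        (by linarith : (0 : ℝ) ≤ 1 - y),
      mul_nonneg (sq_nonneg (y - 2 / 3)) (by linarith : (0 : ℝ) ≤ 8 / 3 - y)]
  · nlinarith [mul_nonneg (sub_nonneg.2 hya) hy.le, sq_nonneg (y - 1), sq_nonneg (a - 2),
      mul_nonneg (sq_nonneg (y - 1)) hy.le,
      mul_nonneg (mul_nonneg (by linarith : (0 : ℝ) ≤ a - 1) (by linarith : (0 : ℝ) ≤ y - 1)) hy.le]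

def logistic (a x : ℝ) : ℝ := a * x * (1 - x)

namespace logistic

variable {a : ℝ}

theorem apply_zero (a : ℝ) : logistic a 0 = 0 := by
  simp [logistic]

theorem isFixedPt_sub_one_div (ha : a ≠ 0) : IsFixedPt (logistic a) ((a - 1) / a) := by
  simp only [IsFixedPt, logistic]
  field_simp
  ring

theorem le_div_four (ha : 0 ≤ a) (x : ℝ) : logistic a x ≤ a / 4 := by
  unfold logistic
  nlinarith [mul_nonneg ha (sq_nonneg (x - 1 / 2))]

theorem mapsTo_Icc_div_four (ha : 0 ≤ a) : MapsTo (logistic a) (Icc 0 1) (Icc 0 (a / 4)) :=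
  fun x hx => ⟨mul_nonneg (mul_nonneg ha hx.1) (sub_nonneg.2 hx.2), le_div_four ha x⟩

theorem mapsTo_Icc (ha : 0 ≤ a) (ha4 : a ≤ 4) : MapsTo (logistic a) (Icc 0 1) (Icc 0 1) :=
  fun _ hx => Icc_subset_Icc le_rfl (by linarith) (mapsTo_Icc_div_four ha hx)

theorem mapsTo_Ioc_div_four (ha : 0 < a) (ha4 : a < 4) :
    MapsTo (logistic a) (Ioc 0 (a / 4)) (Ioc 0 (a / 4)) := fun x hx => by
  have hx1 : 0 < 1 - x := by linarith [hx.2]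
  exact ⟨mul_pos (mul_pos ha hx.1) hx1, le_div_four ha.le x⟩

theorem sq_sub_sq_logistic_logistic (a z : ℝ) :
    (a * z - (a - 1)) ^ 2 - (a * logistic a (logistic a z) - (a - 1)) ^ 2 =
      a * z * (a * z - (a - 1)) ^ 2 * ((a * z) ^ 2 - (a + 1) * (a * z) + (a + 1)) *
        (2 - (a + 1) * (a * z) + (a + 1) * (a * z) ^ 2 - (a * z) ^ 3) := by
  unfold logistic
  ring

theorem lyapunov_lt (ha1 : 1 < a) (ha3 : a < 3) {z : ℝ} (hz : z ∈ Ioc 0 (a / 4))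
    (hzp : z ≠ (a - 1) / a) :
    (a * logistic a (logistic a z) - (a - 1)) ^ 2 < (a * z - (a - 1)) ^ 2 := by
  have ha : 0 < a := by linarith
  have hy : 0 < a * z := mul_pos ha hz.1
  have hy4 : 4 * (a * z) ≤ a ^ 2 := by nlinarith [hz.2]
  have hV : 0 < (a * z - (a - 1)) ^ 2 := by
    refine sq_pos_of_ne_zero (sub_ne_zero.2 fun h => hzp ?_)
    rw [eq_div_iff ha.ne', ← h, mul_comm]
  have hprod := mul_pos (mul_pos (mul_pos hy hV) (quadratic_pos_of_lt_three ha1 ha3 (a * z)))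
    (cubic_pos_of_le_sq_div_four ha1 ha3 hy hy4)
  rw [← sq_sub_sq_logistic_logistic] at hprod
  linarith

theorem mem_Ioc_of_isPeriodicPt (ha : 0 ≤ a) (ha4 : a ≤ 4) {x : ℝ} {n : ℕ}
    (hx : x ∈ Icc (0 : ℝ) 1) (hx0 : x ≠ 0) (hper : IsPeriodicPt (logistic a) n x) (hn : 0 < n) :
    x ∈ Ioc 0 (a / 4) := by
  obtain ⟨m, rfl⟩ := Nat.exists_eq_succ_of_ne_zero hn.ne'
  have hxm : logistic a ((logistic a)^[m] x) = x := by
    rw [← iterate_succ_apply' (logistic a)]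
    exact hper.eq
  have hmem := mapsTo_Icc_div_four ha ((mapsTo_Icc ha ha4).iterate m hx)
  rw [hxm] at hmem
  exact ⟨hmem.1.lt_of_ne' hx0, hmem.2⟩

end logistic

theorem periodic_points_of_quadratic_low_parameter
    (a : ℝ) (ha : a ∈ Ioo (1 : ℝ) 3)
    (f : ℝ → ℝ) (hf : ∀ x, f x = a * x * (1 - x)) :
    (∀ x ∈ Icc (0 : ℝ) 1, ∀ n : ℕ, 1 ≤ n → f^[n] x = x →
      x = 0 ∨ x = (a - 1) / a) ∧
    f 0 = 0 ∧ f ((a - 1) / a) = (a - 1) / a := by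
  obtain ⟨ha1, ha3⟩ := ha
  obtain rfl : f = logistic a := funext hf
  have ha0 : 0 < a := by linarith
  have hp := logistic.isFixedPt_sub_one_div ha0.ne'
  refine ⟨fun x hx n hn hper => ?_, logistic.apply_zero a, hp⟩
  rcases eq_or_ne x 0 with rfl | hx0
  · exact Or.inl rfl
  have hxs := logistic.mem_Ioc_of_isPeriodicPt ha0.le (by linarith) hx hx0 hper hn
  exact Or.inr <| (IsPeriodicPt.iterate hper 2).eq_of_strict_lyapunov hn hxs
    ((logistic.mapsTo_Ioc_div_four ha0 (by linarith)).iterate 2) (hp.iterate 2)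
    (V := fun z => (a * z - (a - 1)) ^ 2) fun _ hz hzp => logistic.lyapunov_lt ha1 ha3 hz hzp
end

section
/- Let a > 4 and let f_a(x) = a·x·(1 − x). Let Λ = {x ∈ [0,1] : f_a^n(x) ∈ [0,1] for all n ≥ 0} be the set of points whose forward orbit stays in [0,1]. Then Λ is a compact f_a-invariant set and the restriction of f_a to Λ is topologically conjugate to the full one-sided shift on two symbols: there is a homeomorphism φ from Λ onto the product space {0,1}^ℕ (with the product topology) such that φ ∘ f_a = σ ∘ φ on Λ, where σ is the shift map σ(ω)(n) = ω(n+1). -/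
/-!
Every point of the non-escaping set lies on one of the two branches `[0, p]`, `[1 - p, 1]`,
where `p < 1/2` solves `f_a p = 1`, and its itinerary records the branch visited by each iterate. In the
coordinate `θ = (2/π) arcsin √x`, which turns `f_4` into the tent map, `f_a` expands distances
on each branch by at least `√a > 1`. So two points with the same itinerary, whose iterates
always share a branch, would have `θ`-distance growing like `√a ^ n` inside `[0, 1]`: the
itinerary is injective. It is onto since `f_a` maps each branch onto `[0, 1]`, so the finite
cylinder sets are nonempty and compactness lets us pass to the limit. It is continuous since the
branches are separated by a gap of positive length. A continuous bijection from a compact space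
to a Hausdorff space is a homeomorphism, and the itinerary of `f_a x` is the shift of that of `x`.
-/

open Set Real

namespace Logistic

variable {a : ℝ}

def logisticMap (a x : ℝ) : ℝ := a * x * (1 - x)

theorem continuous_logisticMap : Continuous (logisticMap a) := by
  unfold logisticMap; fun_prop

theorem logisticMap_one_sub (x : ℝ) : logisticMap a (1 - x) = logisticMap a x := by
  unfold logisticMap; ring

theorem hasDerivAt_logisticMap (x : ℝ) : HasDerivAt (logisticMap a) (a * (1 - 2 * x)) x :=
  (((hasDerivAt_id x).const_mul a).mul ((hasDerivAt_id x).const_sub 1)).congr_deriv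
    (by simp only [id]; ring)

/-- `gapLeft a` and `1 - gapLeft a` are the solutions of `logisticMap a x = 1`. -/
noncomputable def gapLeft (a : ℝ) : ℝ := (1 - √(1 - 4 / a)) / 2

theorem gapLeft_pos (ha : 4 ≤ a) : 0 < gapLeft a := by
  have : √(1 - 4 / a) < 1 := by
    rw [sqrt_lt' one_pos]
    have : 0 < 4 / a := by positivity
    linarith
  unfold gapLeft; linarith

theorem gapLeft_le_half : gapLeft a ≤ 1 / 2 := by
  unfold gapLeft; linarith [sqrt_nonneg (1 - 4 / a)]

theorem gapLeft_lt_half (ha : 4 < a) : gapLeft a < 1 / 2 := by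
  have : 0 < √(1 - 4 / a) := sqrt_pos.2 (by rw [sub_pos, div_lt_one (by linarith)]; exact ha)
  unfold gapLeft; linarith

theorem one_sub_logisticMap (ha : 4 ≤ a) (x : ℝ) :
    1 - logisticMap a x = a * (x - gapLeft a) * (x - (1 - gapLeft a)) := by
  have hsq : √(1 - 4 / a) ^ 2 = 1 - 4 / a :=
    sq_sqrt (by rw [sub_nonneg, div_le_one (by linarith)]; exact ha)
  have h : a * √(1 - 4 / a) ^ 2 = a - 4 := by
    rw [hsq]; field_simp
  unfold logisticMap gapLeft
  linear_combination (1 / 4) * h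

theorem logisticMap_gapLeft (ha : 4 ≤ a) : logisticMap a (gapLeft a) = 1 := by
  have h := one_sub_logisticMap ha (gapLeft a)
  rw [sub_self, mul_zero, zero_mul] at h
  linarith

theorem logisticMap_le_one_iff (ha : 4 ≤ a) {x : ℝ} :
    logisticMap a x ≤ 1 ↔ x ≤ gapLeft a ∨ 1 - gapLeft a ≤ x := by
  have hfac := one_sub_logisticMap ha x
  have hp := gapLeft_le_half (a := a)
  constructor
  · intro h
    by_contra! hx
    nlinarith [mul_pos (mul_pos (by linarith : 0 < a) (sub_pos.2 hx.1)) (sub_pos.2 hx.2)]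
  · rintro (hx | hx)
    · nlinarith [mul_nonneg (mul_nonneg (by linarith : 0 ≤ a) (sub_nonneg.2 hx))
        (by linarith : 0 ≤ 1 - gapLeft a - x)]
    · nlinarith [mul_nonneg (mul_nonneg (by linarith : 0 ≤ a) (by linarith : 0 ≤ x - gapLeft a))
        (sub_nonneg.2 hx)]

theorem logisticMap_mem_Ioo (ha : 4 ≤ a) {x : ℝ} (hx : x ∈ Ioo 0 (gapLeft a)) :
    logisticMap a x ∈ Ioo (0 : ℝ) 1 := by
  have hp := gapLeft_le_half (a := a)
  have hfac := one_sub_logisticMap ha x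
  obtain ⟨hx0, hxp⟩ := hx
  constructor
  · have : 0 < 1 - x := by linarith
    have : 0 < a := by linarith
    unfold logisticMap; positivity
  · nlinarith [mul_pos (mul_pos (by linarith : 0 < a) (sub_pos.2 hxp))
      (by linarith : 0 < 1 - gapLeft a - x)]

/-- Turns `logisticMap 4` into the tent map. -/
noncomputable def tentCoord (x : ℝ) : ℝ := 2 / π * arcsin √x

theorem continuous_tentCoord : Continuous tentCoord := by
  unfold tentCoord; fun_prop

theorem tentCoord_mono : Monotone tentCoord := fun _ _ h =>
  mul_le_mul_of_nonneg_left (monotone_arcsin (sqrt_le_sqrt h)) (by positivity)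

theorem tentCoord_mem_Icc (x : ℝ) : tentCoord x ∈ Icc (0 : ℝ) 1 := by
  have h0 := arcsin_nonneg.2 (sqrt_nonneg x)
  have h1 := arcsin_le_pi_div_two √x
  unfold tentCoord
  constructor
  · positivity
  · calc 2 / π * arcsin √x ≤ 2 / π * (π / 2) := by gcongr
      _ = 1 := by field_simp

theorem tentCoord_injOn : InjOn tentCoord (Icc 0 1) := by
  intro x hx y hy h
  have h' : arcsin √x = arcsin √y := by
    unfold tentCoord at h; field_simp at h; exact h
  have := congrArg sin h'
  rw [sin_arcsin (by linarith [sqrt_nonneg x]) (sqrt_le_one.2 hx.2),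
    sin_arcsin (by linarith [sqrt_nonneg y]) (sqrt_le_one.2 hy.2)] at this
  exact (sqrt_inj hx.1 hy.1).1 this

theorem tentCoord_one_sub {x : ℝ} (hx : x ∈ Icc (0 : ℝ) 1) :
    tentCoord (1 - x) = 1 - tentCoord x := by
  have : arcsin √(1 - x) = π / 2 - arcsin √x := by
    rw [← arccos_eq_pi_div_two_sub_arcsin, arccos_eq_arcsin (sqrt_nonneg x), sq_sqrt hx.1]
  unfold tentCoord
  rw [this]; field_simp

theorem hasDerivAt_tentCoord {y : ℝ} (hy : y ∈ Ioo (0 : ℝ) 1) :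
    HasDerivAt tentCoord (1 / (π * √(y * (1 - y)))) y := by
  have hsy : √y < 1 := by rw [sqrt_lt' one_pos, one_pow]; exact hy.2
  have h := ((hasDerivAt_arcsin (by linarith [sqrt_nonneg y]) hsy.ne).comp y
    (hasDerivAt_sqrt hy.1.ne')).const_mul (2 / π)
  rw [sq_sqrt hy.1.le] at h
  have h1 : 0 < √y := sqrt_pos.2 hy.1
  have h2 : 0 < √(1 - y) := sqrt_pos.2 (by linarith [hy.2])
  refine h.congr_deriv ?_
  rw [sqrt_mul hy.1.le]
  field_simp

theorem sqrt_mul_deriv_tentCoord_le (ha : 4 ≤ a) {x : ℝ} (hx : x ∈ Ioo 0 (gapLeft a)) :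
    √a * (1 / (π * √(x * (1 - x)))) ≤
      1 / (π * √(logisticMap a x * (1 - logisticMap a x))) * (a * (1 - 2 * x)) := by
  have hp := gapLeft_le_half (a := a)
  have hx0 : 0 < x * (1 - x) := mul_pos hx.1 (by linarith [hx.2])
  have hy1 := logisticMap_mem_Ioo ha hx
  set y := logisticMap a x with hy
  have hs : 0 < √(x * (1 - x)) := sqrt_pos.2 hx0
  have ht : 0 < √(1 - y) := sqrt_pos.2 (sub_pos.2 hy1.2)
  have hyy : √(y * (1 - y)) = √a * √(x * (1 - x)) * √(1 - y) := by
    rw [← sqrt_mul (by linarith), ← sqrt_mul (mul_nonneg (by linarith) hx0.le), hy, logisticMap]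
    ring_nf
  -- `1 - y = 1 - a x (1 - x) ≤ 1 - 4 x (1 - x) = (1 - 2x)²`
  have hty : √(1 - y) ≤ 1 - 2 * x := by
    rw [sqrt_le_left (by linarith [hx.2]), hy, logisticMap]
    nlinarith
  have hD : 1 / (π * √(y * (1 - y))) * (a * (1 - 2 * x)) =
      √a * (1 / (π * √(x * (1 - x)))) * ((1 - 2 * x) / √(1 - y)) := by
    have ha2 : √a ^ 2 = a := sq_sqrt (by linarith)
    rw [hyy]
    field_simp
    rw [ha2]
  rw [hD]
  exact le_mul_of_one_le_right (by positivity) ((one_le_div ht).2 hty)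

theorem monotoneOn_tentCoord_logisticMap_sub (ha : 4 ≤ a) :
    MonotoneOn (fun x => tentCoord (logisticMap a x) - √a * tentCoord x)
      (Icc 0 (gapLeft a)) := by
  have hp := gapLeft_le_half (a := a)
  have hderiv : ∀ x ∈ Ioo 0 (gapLeft a), HasDerivAt
      (fun x => tentCoord (logisticMap a x) - √a * tentCoord x)
      (1 / (π * √(logisticMap a x * (1 - logisticMap a x))) * (a * (1 - 2 * x)) -
        √a * (1 / (π * √(x * (1 - x))))) x := fun x hx =>
    ((hasDerivAt_tentCoord (logisticMap_mem_Ioo ha hx)).comp x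
      (hasDerivAt_logisticMap x)).sub
      ((hasDerivAt_tentCoord ⟨hx.1, by linarith [hx.2]⟩).const_mul √a)
  apply monotoneOn_of_deriv_nonneg (convex_Icc _ _)
  · exact ((continuous_tentCoord.comp continuous_logisticMap).sub
      (continuous_const.mul continuous_tentCoord)).continuousOn
  · intro x hx
    rw [interior_Icc] at hx
    exact (hderiv x hx).differentiableAt.differentiableWithinAt
  · intro x hx
    rw [interior_Icc] at hx
    rw [(hderiv x hx).deriv, sub_nonneg]
    exact sqrt_mul_deriv_tentCoord_le ha hx

theorem sqrt_mul_abs_tentCoord_sub_le_of_mem_Icc_gapLeft (ha : 4 ≤ a) {u v : ℝ}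
    (hu : u ∈ Icc 0 (gapLeft a)) (hv : v ∈ Icc 0 (gapLeft a)) :
    √a * |tentCoord u - tentCoord v| ≤
      |tentCoord (logisticMap a u) - tentCoord (logisticMap a v)| := by
  wlog huv : u ≤ v generalizing u v
  · rw [abs_sub_comm, abs_sub_comm (tentCoord (logisticMap a u))]
    exact this hv hu (le_of_not_ge huv)
  have hmono := monotoneOn_tentCoord_logisticMap_sub ha hu hv huv
  rw [abs_sub_comm, abs_of_nonneg (sub_nonneg.2 (tentCoord_mono huv)), abs_sub_comm]
  refine le_trans ?_ (le_abs_self _)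
  dsimp only at hmono
  linarith

def branch (a : ℝ) : Fin 2 → Set ℝ := ![Icc 0 (gapLeft a), Icc (1 - gapLeft a) 1]

theorem isClosed_branch (b : Fin 2) : IsClosed (branch a b) := by
  fin_cases b <;> exact isClosed_Icc

theorem branch_subset_Icc (b : Fin 2) : branch a b ⊆ Icc 0 1 := by
  have := gapLeft_le_half (a := a)
  fin_cases b
  · exact Icc_subset_Icc_right (by linarith)
  · exact Icc_subset_Icc_left (by linarith)

theorem sqrt_mul_abs_tentCoord_sub_le_of_mem_branch (ha : 4 ≤ a) {b : Fin 2} {u v : ℝ}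
    (hu : u ∈ branch a b) (hv : v ∈ branch a b) :
    √a * |tentCoord u - tentCoord v| ≤
      |tentCoord (logisticMap a u) - tentCoord (logisticMap a v)| := by
  fin_cases b
  · exact sqrt_mul_abs_tentCoord_sub_le_of_mem_Icc_gapLeft ha hu hv
  · have hu' := branch_subset_Icc 1 hu
    have hv' := branch_subset_Icc 1 hv
    simp only [branch, Fin.mk_one, Matrix.cons_val_one, Matrix.cons_val_zero, mem_Icc] at hu hv
    have key := sqrt_mul_abs_tentCoord_sub_le_of_mem_Icc_gapLeft ha (u := 1 - u) (v := 1 - v)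
      ⟨by linarith, by linarith⟩ ⟨by linarith, by linarith⟩
    rwa [logisticMap_one_sub, logisticMap_one_sub, tentCoord_one_sub hu', tentCoord_one_sub hv',
      sub_sub_sub_cancel_left, abs_sub_comm] at key

theorem exists_mem_branch_logisticMap_eq (ha : 4 ≤ a) {y : ℝ} (hy : y ∈ Icc (0 : ℝ) 1)
    (b : Fin 2) : ∃ x ∈ branch a b, logisticMap a x = y := by
  have hp := gapLeft_le_half (a := a)
  have hcont := (continuous_logisticMap (a := a)).continuousOn (s := branch a b)
  fin_cases b
  · have := intermediate_value_Icc (gapLeft_pos ha).le hcont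
    rw [logisticMap_gapLeft ha, show logisticMap a 0 = 0 by simp [logisticMap]] at this
    exact this hy
  · have := intermediate_value_Icc' (by linarith [gapLeft_pos ha]) hcont
    rw [logisticMap_one_sub, logisticMap_gapLeft ha, show logisticMap a 1 = 0 by simp [logisticMap]]
      at this
    exact this hy

def nonEscaping (a : ℝ) : Set ℝ := {x | ∀ n : ℕ, (logisticMap a)^[n] x ∈ Icc 0 1}

theorem nonEscaping_subset_Icc : nonEscaping a ⊆ Icc 0 1 := fun _ hx => hx 0

theorem isCompact_nonEscaping : IsCompact (nonEscaping a) := by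
  refine isCompact_Icc.of_isClosed_subset ?_ nonEscaping_subset_Icc
  simp only [nonEscaping, ofPred_forall]
  exact isClosed_iInter fun n => isClosed_Icc.preimage (continuous_logisticMap.iterate n)

theorem mapsTo_logisticMap_nonEscaping :
    MapsTo (logisticMap a) (nonEscaping a) (nonEscaping a) :=
  fun x hx n => by rw [← Function.iterate_succ_apply]; exact hx (n + 1)

theorem le_gapLeft_or_one_sub_le (ha : 4 ≤ a) {x : ℝ} (hx : x ∈ nonEscaping a) :
    x ≤ gapLeft a ∨ 1 - gapLeft a ≤ x :=
  (logisticMap_le_one_iff ha).1 (hx 1).2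

noncomputable def side (a x : ℝ) : Fin 2 := if x ≤ gapLeft a then 0 else 1

noncomputable def itinerary (a x : ℝ) (n : ℕ) : Fin 2 := side a ((logisticMap a)^[n] x)

theorem itinerary_logisticMap (x : ℝ) (n : ℕ) :
    itinerary a (logisticMap a x) n = itinerary a x (n + 1) := by
  rw [itinerary, itinerary, Function.iterate_succ_apply]

theorem mem_branch_side (ha : 4 ≤ a) {x : ℝ} (hx : x ∈ nonEscaping a) :
    x ∈ branch a (side a x) := by
  have h01 := nonEscaping_subset_Icc hx
  unfold side
  split_ifs with h
  · exact ⟨h01.1, h⟩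
  · exact ⟨(le_gapLeft_or_one_sub_le ha hx).resolve_left h, h01.2⟩

theorem side_eq_of_mem_branch (ha : 4 < a) {x : ℝ} {b : Fin 2} (hx : x ∈ branch a b) :
    side a x = b := by
  have := gapLeft_lt_half ha
  fin_cases b
  · exact if_pos hx.2
  · exact if_neg (by simp only [branch] at hx; linarith [hx.1])

theorem side_eq_of_abs_sub_lt (ha : 4 ≤ a) {x y : ℝ} (hx : x ∈ nonEscaping a)
    (hy : y ∈ nonEscaping a) (hxy : |x - y| < 1 - 2 * gapLeft a) : side a x = side a y := by
  rw [abs_lt] at hxy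
  have hx' := le_gapLeft_or_one_sub_le ha hx
  have hy' := le_gapLeft_or_one_sub_le ha hy
  unfold side
  split_ifs <;> first
    | rfl
    | (exfalso; rcases hx' with _ | _ <;> rcases hy' with _ | _ <;> linarith)

theorem eq_zero_of_forall_pow_mul_le_one {r d : ℝ} (hr : 1 < r) (hd : 0 ≤ d)
    (h : ∀ n : ℕ, r ^ n * d ≤ 1) : d = 0 := by
  by_contra hne
  obtain ⟨n, hn⟩ := pow_unbounded_of_one_lt d⁻¹ hr
  have := (inv_lt_iff_one_lt_mul₀ (lt_of_le_of_ne hd (Ne.symm hne))).1 hn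
  linarith [h n]

theorem injOn_itinerary (ha : 4 ≤ a) : InjOn (itinerary a) (nonEscaping a) := by
  intro x hx y hy hxy
  have hexpand : ∀ n : ℕ, √a ^ n * |tentCoord x - tentCoord y| ≤
      |tentCoord ((logisticMap a)^[n] x) - tentCoord ((logisticMap a)^[n] y)| := by
    intro n
    induction n with
    | zero => simp
    | succ n ih =>
      have hxn := mem_branch_side ha (mapsTo_logisticMap_nonEscaping.iterate n hx)
      have hyn := mem_branch_side ha (mapsTo_logisticMap_nonEscaping.iterate n hy)
      rw [show side a _ = side a _ from congrFun hxy n] at hxn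
      rw [Function.iterate_succ_apply', Function.iterate_succ_apply', pow_succ', mul_assoc]
      exact (mul_le_mul_of_nonneg_left ih (sqrt_nonneg a)).trans
        (sqrt_mul_abs_tentCoord_sub_le_of_mem_branch ha hxn hyn)
  have hbounded : ∀ n : ℕ,
      |tentCoord ((logisticMap a)^[n] x) - tentCoord ((logisticMap a)^[n] y)| ≤ 1 := fun n =>
    abs_sub_le_of_nonneg_of_le (tentCoord_mem_Icc _).1 (tentCoord_mem_Icc _).2
      (tentCoord_mem_Icc _).1 (tentCoord_mem_Icc _).2
  have h1a : 1 < √a := by rw [lt_sqrt zero_le_one]; linarith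
  have hzero := eq_zero_of_forall_pow_mul_le_one h1a (abs_nonneg _)
    fun n => (hexpand n).trans (hbounded n)
  exact tentCoord_injOn (nonEscaping_subset_Icc hx) (nonEscaping_subset_Icc hy)
    (sub_eq_zero.1 (abs_eq_zero.1 hzero))

theorem exists_forall_le_iterate_mem_branch (ha : 4 ≤ a) (N : ℕ) (ω : ℕ → Fin 2) :
    ∃ x, ∀ k ≤ N, (logisticMap a)^[k] x ∈ branch a (ω k) := by
  induction N generalizing ω with
  | zero =>
    obtain ⟨x, hx, -⟩ := exists_mem_branch_logisticMap_eq ha (left_mem_Icc.2 zero_le_one) (ω 0)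
    exact ⟨x, fun k hk => by rwa [Nat.le_zero.1 hk]⟩
  | succ N ih =>
    obtain ⟨y, hy⟩ := ih fun k => ω (k + 1)
    obtain ⟨x, hx, rfl⟩ :=
      exists_mem_branch_logisticMap_eq ha (branch_subset_Icc _ (hy 0 N.zero_le)) (ω 0)
    refine ⟨x, fun k hk => ?_⟩
    cases k with
    | zero => exact hx
    | succ k => rw [Function.iterate_succ_apply]; exact hy k (by omega)

theorem surjOn_itinerary (ha : 4 < a) : SurjOn (itinerary a) (nonEscaping a) univ := by
  intro ω _
  set cylinder : ℕ → Set ℝ := fun N => {x | ∀ k ≤ N, (logisticMap a)^[k] x ∈ branch a (ω k)}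
  have hclosed : ∀ N, IsClosed (cylinder N) := fun N => by
    simp only [cylinder, ofPred_forall]
    exact isClosed_iInter fun k => isClosed_iInter fun _ =>
      (isClosed_branch _).preimage (continuous_logisticMap.iterate k)
  obtain ⟨x, hx⟩ := IsCompact.nonempty_iInter_of_sequence_nonempty_isCompact_isClosed cylinder
    (fun N x hx k hk => hx k (by omega)) (exists_forall_le_iterate_mem_branch ha.le · ω)
    (isCompact_Icc.of_isClosed_subset (hclosed 0) fun x hx => branch_subset_Icc _ (hx 0 le_rfl))
    hclosed
  have hmem : ∀ k, (logisticMap a)^[k] x ∈ branch a (ω k) := fun k => mem_iInter.1 hx k k le_rfl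
  exact ⟨x, fun k => branch_subset_Icc _ (hmem k),
    funext fun k => side_eq_of_mem_branch ha (hmem k)⟩

theorem continuousOn_side (ha : 4 < a) : ContinuousOn (side a) (nonEscaping a) := by
  intro x hx
  have hgap : 0 < 1 - 2 * gapLeft a := by linarith [gapLeft_lt_half ha]
  refine continuousWithinAt_const.congr_of_eventuallyEq ?_ rfl
  filter_upwards [self_mem_nhdsWithin, mem_nhdsWithin_of_mem_nhds (Metric.ball_mem_nhds x hgap)]
    with y hy hyx
  exact side_eq_of_abs_sub_lt ha.le hy hx hyx

theorem continuous_domRestrict_itinerary (ha : 4 < a) :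
    Continuous ((nonEscaping a).domRestrict (itinerary a)) :=
  continuous_pi fun n => (continuousOn_side ha).comp_continuous
    ((continuous_logisticMap.iterate n).comp continuous_subtype_val)
    fun x => mapsTo_logisticMap_nonEscaping.iterate n x.2

noncomputable def itineraryHomeomorph (ha : 4 < a) : nonEscaping a ≃ₜ (ℕ → Fin 2) :=
  haveI := isCompact_iff_compactSpace.mp (isCompact_nonEscaping (a := a))
  (continuous_domRestrict_itinerary ha).homeoOfEquivCompactToT2
    (f := Equiv.ofBijective _ ⟨(injOn_itinerary ha.le).injective,
      surjOn_iff_surjective.1 (surjOn_itinerary ha)⟩)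

end Logistic

open Logistic

theorem quadratic_gt_four_conjugate_to_full_shift
    (a : ℝ) (ha : 4 < a)
    (f : ℝ → ℝ) (hf : ∀ x, f x = a * x * (1 - x))
    (Λ : Set ℝ) (hΛ : Λ = {x ∈ Icc (0 : ℝ) 1 | ∀ n : ℕ, f^[n] x ∈ Icc (0 : ℝ) 1}) :
    IsCompact Λ ∧
    ∃ (hinv : MapsTo f Λ Λ) (φ : Λ ≃ₜ (ℕ → Fin 2)),
      ∀ x : Λ, φ (hinv.restrict f Λ Λ x) = fun n => φ x (n + 1) := by
  obtain rfl : f = logisticMap a := funext hf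
  obtain rfl : Λ = nonEscaping a := hΛ.trans (ext fun x => ⟨fun h => h.2, fun h => ⟨h 0, h⟩⟩)
  exact ⟨isCompact_nonEscaping, mapsTo_logisticMap_nonEscaping, itineraryHomeomorph ha,
    fun x => funext (itinerary_logisticMap x)⟩
end
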